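/- Fix d > 0. Let R be a nonnegative real-valued random variable whose cumulative distribution function is P(R ≤ r) = 1 - 1/(1+r) for r ≥ 0 (i.e., R has probability density g(R) = (1+R)^{-2} on [0, ∞)), and define μ = (1+R)^{1/d}. Then μ ≥ 1 almost surely and the cumulative distribution function of μ is F(m) = P(μ ≤ m) = 1 - m^{-d} for m ≥ 1 (equivalently, μ has probability density f(m) = d m^{-d-1} on [1, ∞)); consequently, for every m > 1 with F(m) < 1, d = -log(1 - F(m)) / log(m). -/
import Mathlib


open MeasureTheory

/-- TWONN distribution of the nearest-neighbor distance ratio: if `R ≥ 0` has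
CDF `P(R ≤ r) = 1 - 1/(1+r)` (density `(1+R)⁻²` on `[0,∞)`) and
`μ = (1+R)^(1/d)` for `d > 0`, then `μ ≥ 1` a.s., the CDF of `μ` is
`F(m) = 1 - m^(-d)` for `m ≥ 1` (density `d m^(-d-1)` on `[1,∞)`), and for
every `m > 1` with `F(m) < 1` one recovers `d = -log(1 - F(m)) / log m`. -/
theorem twonn_mu_distribution
    {Ω : Type*} [MeasurableSpace Ω] (P : Measure Ω) [IsProbabilityMeasure P]
    (d : ℝ) (hd : 0 < d) (R : Ω → ℝ) (hR : Measurable R)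
    (hR0 : ∀ᵐ ω ∂P, 0 ≤ R ω)
    (hcdf : ∀ r : ℝ, 0 ≤ r →
      P {ω | R ω ≤ r} = ENNReal.ofReal (1 - 1 / (1 + r))) :
    (∀ᵐ ω ∂P, 1 ≤ (1 + R ω) ^ (1 / d)) ∧
    (∀ m : ℝ, 1 ≤ m →
      P {ω | (1 + R ω) ^ (1 / d) ≤ m} = ENNReal.ofReal (1 - m ^ (-d))) ∧
    (∀ m : ℝ, 1 < m →
      (P {ω | (1 + R ω) ^ (1 / d) ≤ m}).toReal < 1 →
      d = -Real.log (1 - (P {ω | (1 + R ω) ^ (1 / d) ≤ m}).toReal) /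
            Real.log m) := by
  have hcdf' : ∀ m : ℝ, 1 ≤ m →
      P {ω | (1 + R ω) ^ (1 / d) ≤ m} = ENNReal.ofReal (1 - m ^ (-d)) := by
    intro m hm
    have hm0 : (0:ℝ) < m := lt_of_lt_of_le one_pos hm
    have hmd : (1:ℝ) ≤ m ^ d := Real.one_le_rpow hm hd.le
    have hset : {ω | (1 + R ω) ^ (1 / d) ≤ m} =ᵐ[P] {ω | R ω ≤ m ^ d - 1} := by
      filter_upwards [hR0] with ω hω
      have h1 : (0:ℝ) ≤ 1 + R ω := by linarith
      show ((1 + R ω) ^ (1/d) ≤ m) = (R ω ≤ m ^ d - 1)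
      rw [eq_iff_iff, one_div, Real.rpow_inv_le_iff_of_pos h1 hm0.le hd]
      constructor <;> intro h <;> linarith
    rw [measure_congr hset, hcdf _ (by linarith)]
    congr 1
    have : 1 + (m ^ d - 1) = m ^ d := by ring
    rw [this, Real.rpow_neg hm0.le, one_div]
  refine ⟨?_, hcdf', ?_⟩
  · filter_upwards [hR0] with ω hω
    exact Real.one_le_rpow (by linarith) (by positivity)
  · intro m hm _
    have hm0 : (0:ℝ) < m := lt_trans one_pos hm
    have hmd : (0:ℝ) < m ^ (-d) := Real.rpow_pos_of_pos hm0 _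
    have hmd1 : m ^ (-d) ≤ 1 := Real.rpow_le_one_of_one_le_of_nonpos hm.le (by linarith)
    rw [hcdf' m hm.le, ENNReal.toReal_ofReal (by linarith)]
    have : 1 - (1 - m ^ (-d)) = m ^ (-d) := by ring
    rw [this, Real.log_rpow hm0]
    have hlog : Real.log m ≠ 0 := ne_of_gt (Real.log_pos hm)
    field_simp
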